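/- arXiv:1603.05041 — 2 statements merged into one kernel-verified Lean document; each statement's English description precedes it below -/
import Mathlib

section
/- Let φ be a real function defined near 1 (for a ≠ 1) with lim_{a→1} φ(a) = α+1. Then for every real x and nonnegative integer n, lim_{a→1} (a-1)^n m_n^{a, φ(a)}(x/(1-a)) = L_n^{α}(x). -/
/-! Writing `a⁻¹ = 1 + (1 - a) / a`, expanding binomially and applying Chu–Vandermonde gives
`m_n^{a,c}(y) = (a / (1 - a))^n ∑ᵢ ((1 - a) / a)^i C(y, i) C(-c - i, n - i)`.
At `y = x / (1 - a)` the factor `(1 - a)^i C(y, i) = ∏_{t < i} (x - t (1 - a)) / i!` is a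
polynomial in `a`, so `(a - 1)^n m_n` is a polynomial in `(a, c)` and the limit is its value at
`(1, α + 1)`.
The reflection `C(-r, k) = (-1)^k C(r + k - 1, k)` identifies that value with `L_n^α(x)`. -/

open Filter Topology Finset

/-- Generalized binomial coefficient C(y, k) = y(y-1)⋯(y-k+1)/k!. -/
noncomputable def gbinom (y : ℝ) (k : ℕ) : ℝ :=
  (∏ i ∈ Finset.range k, (y - i)) / (Nat.factorial k)

/-- Pochhammer symbol (y)_k = y(y+1)⋯(y+k-1). -/
noncomputable def poch (y : ℝ) (k : ℕ) : ℝ :=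
  ∏ i ∈ Finset.range k, (y + i)

/-- Laguerre polynomial L_n^α(x). -/
noncomputable def laguerre (n : ℕ) (α x : ℝ) : ℝ :=
  ∑ j ∈ Finset.range (n + 1), ((-x) ^ j / (Nat.factorial j)) * gbinom ((n : ℝ) + α) (n - j)

/-- Meixner polynomial m_n^{a,c}(x). -/
noncomputable def meixner (n : ℕ) (a c x : ℝ) : ℝ :=
  (a ^ n / (1 - a) ^ n) *
    ∑ j ∈ Finset.range (n + 1), (a⁻¹) ^ j * gbinom x j * gbinom (-x - c) (n - j)

section BinomialRing

variable {R : Type*} [CommRing R] [BinomialRing R]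

theorem Ring.add_choose_eq_sum_range (r s : R) (k : ℕ) :
    Ring.choose (r + s) k = ∑ i ∈ range (k + 1), Ring.choose r i * Ring.choose s (k - i) := by
  rw [Ring.add_choose_eq k (Commute.all r s),
    Nat.sum_antidiagonal_eq_sum_range_succ (fun i j => Ring.choose r i * Ring.choose s j)]

theorem Ring.sum_one_add_pow_mul_choose_mul_choose (t y z : R) (n : ℕ) :
    ∑ j ∈ range (n + 1), (1 + t) ^ j * Ring.choose y j * Ring.choose z (n - j) =
      ∑ i ∈ range (n + 1), t ^ i * Ring.choose y i * Ring.choose (y + z - i) (n - i) := by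
  calc ∑ j ∈ range (n + 1), (1 + t) ^ j * Ring.choose y j * Ring.choose z (n - j)
      = ∑ j ∈ range (n + 1), ∑ i ∈ range (j + 1),
          t ^ i * Ring.choose y i * (Ring.choose (y - i) (j - i) * Ring.choose z (n - j)) := by
        refine sum_congr rfl fun j _ => ?_
        rw [add_comm, add_pow, sum_mul, sum_mul]
        refine sum_congr rfl fun i hi => ?_
        have hij : i ≤ j := Nat.lt_succ_iff.mp (mem_range.mp hi)
        rw [one_pow, mul_one, mul_assoc (t ^ i), ← nsmul_eq_mul, Ring.choose_smul_choose y hij]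
        ring
    _ = ∑ i ∈ range (n + 1), ∑ j ∈ Ico i (n + 1),
          t ^ i * Ring.choose y i * (Ring.choose (y - i) (j - i) * Ring.choose z (n - j)) :=
        sum_comm' (fun j i => by simp only [mem_range, mem_Ico]; omega)
    _ = ∑ i ∈ range (n + 1), t ^ i * Ring.choose y i * Ring.choose (y + z - i) (n - i) := by
        refine sum_congr rfl fun i hi => ?_
        have hin : i ≤ n := Nat.lt_succ_iff.mp (mem_range.mp hi)
        rw [← mul_sum, sum_Ico_eq_sum_range, add_sub_right_comm y z, Ring.add_choose_eq_sum_range,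
          show n + 1 - i = n - i + 1 by omega]
        congr 2 with m
        congr 2 <;> omega

end BinomialRing

lemma gbinom_eq_choose (y : ℝ) (k : ℕ) : gbinom y k = Ring.choose y k := by
  rw [Ring.choose_eq_smul, ← Polynomial.aeval_eq_smeval, Polynomial.aeval_def,
    ← Polynomial.eval_map, descPochhammer_map, descPochhammer_eval_eq_prod_range, smul_eq_mul,
    gbinom, div_eq_inv_mul]

lemma gbinom_neg (r : ℝ) (k : ℕ) : gbinom (-r) k = (-1) ^ k * gbinom (r + k - 1) k := by
  simp only [gbinom_eq_choose, Ring.choose_neg, Units.smul_def, Int.cast_negOnePow_natCast,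
    zsmul_eq_mul]

lemma continuous_gbinom (k : ℕ) : Continuous (gbinom · k) := by
  unfold gbinom
  fun_prop

lemma pow_mul_gbinom_div (h x : ℝ) (hh : h ≠ 0) (i : ℕ) :
    h ^ i * gbinom (x / h) i = (∏ t ∈ range i, (x - t * h)) / i.factorial := by
  have hpow : h ^ i = ∏ _t ∈ range i, h := by simp
  rw [gbinom, mul_div_assoc', hpow, ← prod_mul_distrib]
  congr 2 with t
  field_simp

lemma sub_one_pow_mul_meixner_div (n : ℕ) (a c x : ℝ) (ha0 : a ≠ 0) (ha1 : a ≠ 1) :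
    (a - 1) ^ n * meixner n a c (x / (1 - a)) =
      ∑ i ∈ range (n + 1), (-1) ^ n * (a ^ (n - i) * ∏ t ∈ range i, (x - t * (1 - a))) /
        i.factorial * gbinom (-c - i) (n - i) := by
  have h1a : 1 - a ≠ 0 := sub_ne_zero.mpr (Ne.symm ha1)
  have hinv : a⁻¹ = 1 + (1 - a) / a := by field_simp; ring
  rw [meixner, hinv]
  simp only [gbinom_eq_choose]
  rw [Ring.sum_one_add_pow_mul_choose_mul_choose, ← mul_assoc, mul_sum]
  simp only [← gbinom_eq_choose]
  refine sum_congr rfl fun i hi => ?_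
  have hin : i ≤ n := Nat.lt_succ_iff.mp (mem_range.mp hi)
  rw [mul_div_assoc, mul_div_assoc, ← pow_mul_gbinom_div (1 - a) x h1a,
    show x / (1 - a) + (-(x / (1 - a)) - c) - i = -c - i by ring, ← pow_sub_mul_pow a hin,
    show a - 1 = -(1 - a) by ring, neg_pow, div_pow]
  field_simp

lemma laguerre_eq_sum_gbinom_neg (n : ℕ) (α x : ℝ) :
    laguerre n α x =
      ∑ i ∈ range (n + 1), (-1) ^ n * x ^ i / i.factorial * gbinom (-(α + 1) - i) (n - i) := by
  refine sum_congr rfl fun i hi => ?_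
  have hin : i ≤ n := Nat.lt_succ_iff.mp (mem_range.mp hi)
  rw [← neg_add', gbinom_neg, Nat.cast_sub hin, show α + 1 + i + (n - i) - 1 = n + α by ring,
    neg_pow, ← pow_sub_mul_pow (-1 : ℝ) hin]
  ring_nf
  rw [pow_mul', neg_one_sq, one_pow, mul_one]

theorem stmt5 (n : ℕ) (α x : ℝ) (φ : ℝ → ℝ)
    (hφ : Tendsto φ (𝓝[≠] (1 : ℝ)) (𝓝 (α + 1))) :
    Tendsto (fun a : ℝ => (a - 1) ^ n * meixner n a (φ a) (x / (1 - a)))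
      (𝓝[≠] (1 : ℝ)) (𝓝 (laguerre n α x)) := by
  rw [laguerre_eq_sum_gbinom_neg]
  have hterm : ∀ i ∈ range (n + 1), Tendsto
      (fun a => (-1) ^ n * (a ^ (n - i) * ∏ t ∈ range i, (x - t * (1 - a))) / i.factorial *
        gbinom (-φ a - i) (n - i))
      (𝓝[≠] 1) (𝓝 ((-1) ^ n * x ^ i / i.factorial * gbinom (-(α + 1) - i) (n - i))) := by
    intro i _
    have hpoly : Tendsto (fun a : ℝ => a ^ (n - i) * ∏ t ∈ range i, (x - t * (1 - a)))
        (𝓝[≠] 1) (𝓝 (x ^ i)) :=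
      ((by fun_prop : Continuous _).tendsto' 1 _ (by simp)).mono_left nhdsWithin_le_nhds
    have hbinom := ((continuous_gbinom (n - i)).tendsto _).comp (hφ.neg.sub_const (i : ℝ))
    exact ((hpoly.const_mul _).div_const _).mul hbinom
  refine (tendsto_finsetSum _ hterm).congr' ?_
  filter_upwards [self_mem_nhdsWithin,
    (eventually_ne_nhds one_ne_zero).filter_mono nhdsWithin_le_nhds] with a ha1 ha0
  exact (sub_one_pow_mul_meixner_div n a (φ a) x ha0 ha1).symm
end

section
/- Let κ be a positive integer, a real, and b an integer with 1 ≤ b ≤ κ. Then for every real z, lim_{N→∞} R_κ^{-b,-a,a+b+N}(z)/N^{κ-b} = ((b+1)_{κ-b}/(-1)^{b+κ}) · λ_b^{-b-a}(z). -/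
open Filter Topology Finset

/-- λ_j^u(y) = ∏_{i=0}^{j-1} (y - i(u+i+1)). -/
noncomputable def lam (j : ℕ) (u y : ℝ) : ℝ :=
  ∏ i ∈ Finset.range j, (y - i * (u + i + 1))

/-- θ_x^u = x(x+u+1). -/
noncomputable def theta (x u : ℝ) : ℝ := x * (x + u + 1)

/-- Dual Hahn polynomial R_n^{a,b,N}(x). -/
noncomputable def dualHahn (n : ℕ) (a b N x : ℝ) : ℝ :=
  ∑ j ∈ Finset.range (n + 1),
    (poch (-(n : ℝ)) j * poch (-N + j) (n - j) * poch (a + j + 1) (n - j) /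
      ((-1) ^ j * (Nat.factorial j))) * lam j (a + b) x

/-! The dual Hahn polynomial is a sum over `j` of a coefficient independent of `N` times
`(-N + j)_{κ-j}`, a polynomial in `N` of degree `κ - j` with leading coefficient `(-1)^{κ-j}`.
For `a = -b` the coefficients with `j < b` vanish, since `(j + 1 - b)_{κ-j}` has a zero factor;
so after dividing by `N^{κ-b}` only the term `j = b` survives, and its coefficient is
`κ! / b! · λ_b = (b + 1)_{κ-b} · λ_b`. -/

lemma poch_natCast (n k : ℕ) : poch n k = n.ascFactorial k := by
  simp [poch, Nat.ascFactorial_eq_prod_range]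

lemma poch_neg_natCast (n k : ℕ) : poch (-(n : ℝ)) k = (-1) ^ k * n.descFactorial k := by
  have hsign := Finset.prod_neg (s := range k) fun i : ℕ => (n : ℝ) - i
  rw [Finset.card_range] at hsign
  rw [← descPochhammer_eval_eq_descFactorial ℝ, descPochhammer_eval_eq_prod_range, poch,
    ← hsign]
  exact Finset.prod_congr rfl fun i _ => by ring

lemma poch_neg_natCast_eq_zero {n k : ℕ} (h : n < k) : poch (-(n : ℝ)) k = 0 := by
  rw [poch_neg_natCast, Nat.descFactorial_of_lt h, Nat.cast_zero, mul_zero]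

lemma tendsto_poch_sub_div_pow_self (c : ℝ) (k : ℕ) :
    Tendsto (fun N : ℝ => poch (c - N) k / N ^ k) atTop (𝓝 ((-1) ^ k)) := by
  have hfactor : ∀ᶠ N : ℝ in atTop,
      ∏ i ∈ range k, ((c + i) / N - 1) = poch (c - N) k / N ^ k := by
    filter_upwards [eventually_ne_atTop 0] with N hN
    rw [poch, ← Finset.card_range k, ← Finset.prod_const, Finset.card_range,
      ← Finset.prod_div_distrib]
    exact Finset.prod_congr rfl fun i _ => by field_simp; ring
  refine Tendsto.congr' hfactor ?_
  simpa using tendsto_finsetProd (range k) fun i _ =>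
    ((tendsto_const_nhds (x := c + i)).div_atTop tendsto_id).sub_const (1 : ℝ)

lemma tendsto_poch_sub_div_pow_of_lt (c : ℝ) {k m : ℕ} (hkm : k < m) :
    Tendsto (fun N : ℝ => poch (c - N) k / N ^ m) atTop (𝓝 0) := by
  have hsplit : ∀ᶠ N : ℝ in atTop,
      poch (c - N) k / N ^ k * (N ^ (m - k))⁻¹ = poch (c - N) k / N ^ m := by
    filter_upwards [eventually_ne_atTop 0] with N hN
    field_simp
    rw [mul_assoc, ← pow_add, Nat.add_sub_cancel' hkm.le]
  have hinv : Tendsto (fun N : ℝ => (N ^ (m - k))⁻¹) atTop (𝓝 0) :=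
    tendsto_inv_atTop_zero.comp (tendsto_pow_atTop (by omega))
  simpa using ((tendsto_poch_sub_div_pow_self c k).mul hinv).congr' hsplit

noncomputable def dualHahnCoeff (n : ℕ) (a b x : ℝ) (j : ℕ) : ℝ :=
  poch (-(n : ℝ)) j * poch (a + j + 1) (n - j) / ((-1) ^ j * (Nat.factorial j)) *
    lam j (a + b) x

lemma dualHahn_eq_sum_dualHahnCoeff_mul (n : ℕ) (a b N x : ℝ) :
    dualHahn n a b N x =
      ∑ j ∈ range (n + 1), dualHahnCoeff n a b x j * poch (-N + j) (n - j) := by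
  refine Finset.sum_congr rfl fun j _ => ?_
  rw [dualHahnCoeff]
  ring

lemma dualHahnCoeff_neg_natCast_of_lt {n b j : ℕ} (hbn : b ≤ n) (hjb : j < b) (u x : ℝ) :
    dualHahnCoeff n (-(b : ℝ)) u x j = 0 := by
  have hzero : poch (-(b : ℝ) + j + 1) (n - j) = 0 := by
    rw [show -(b : ℝ) + j + 1 = -((b - j - 1 : ℕ) : ℝ) by
      push_cast [Nat.sub_sub, Nat.cast_sub hjb]; ring]
    exact poch_neg_natCast_eq_zero (by omega)
  rw [dualHahnCoeff, hzero]
  simp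

lemma dualHahnCoeff_neg_natCast_self (b m : ℕ) (u x : ℝ) :
    dualHahnCoeff (b + m) (-(b : ℝ)) u x b = poch (b + 1) m * lam b (-(b : ℝ) + u) x := by
  have hfact :
      ((b + m).descFactorial b * m.factorial : ℝ) = b.factorial * (b + 1).ascFactorial m := by
    have h1 := Nat.factorial_mul_descFactorial (Nat.le_add_right b m)
    have h2 := Nat.factorial_mul_ascFactorial b m
    rw [Nat.add_sub_cancel_left] at h1
    rw [mul_comm]
    exact_mod_cast h1.trans h2.symm
  rw [dualHahnCoeff, poch_neg_natCast, Nat.add_sub_cancel_left,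
    show -(b : ℝ) + b + 1 = (1 : ℕ) by simp,
    show (b : ℝ) + 1 = (b + 1 : ℕ) by push_cast; ring, poch_natCast, poch_natCast,
    Nat.one_ascFactorial]
  field_simp
  rw [hfact]
  ring

theorem stmt15_general (κ : ℕ) (a : ℝ) (b : ℕ) (hbκ : b ≤ κ) (z : ℝ) :
    Tendsto (fun N : ℝ => dualHahn κ (-(b : ℝ)) (-a) (a + b + N) z / N ^ (κ - b)) atTop
      (𝓝 ((poch ((b : ℝ) + 1) (κ - b) / (-1) ^ (b + κ)) * lam b (-(b : ℝ) - a) z)) := by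
  obtain ⟨m, rfl⟩ := Nat.exists_eq_add_of_le hbκ
  have hlimit : ∀ j ∈ range (b + m + 1), Tendsto
      (fun N : ℝ =>
        dualHahnCoeff (b + m) (-(b : ℝ)) (-a) z j * poch (-(a + b + N) + j) (b + m - j) / N ^ m)
      atTop
      (𝓝 (dualHahnCoeff (b + m) (-(b : ℝ)) (-a) z j * if j = b then (-1) ^ m else 0)) := by
    intro j hj
    simp_rw [show ∀ N : ℝ, -(a + b + N) + j = (j - a - b) - N by intro N; ring, mul_div_assoc]
    rcases lt_trichotomy j b with hjb | rfl | hbj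
    · simp [dualHahnCoeff_neg_natCast_of_lt (Nat.le_add_right b m) hjb]
    · simpa [Nat.add_sub_cancel_left] using (tendsto_poch_sub_div_pow_self _ m).const_mul _
    · have hlt : b + m - j < m := by grind
      simpa [hbj.ne'] using (tendsto_poch_sub_div_pow_of_lt _ hlt).const_mul _
  have hsum := tendsto_finsetSum _ hlimit
  simp only [mul_ite, mul_zero, Finset.sum_ite_eq', Finset.mem_range, ← Finset.sum_div,
    ← dualHahn_eq_sum_dualHahnCoeff_mul, dualHahnCoeff_neg_natCast_self] at hsum
  rw [if_pos (by omega)] at hsum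
  rw [Nat.add_sub_cancel_left, show b + (b + m) = 2 * b + m by ring, pow_add, pow_mul]
  convert hsum using 2
  simp only [neg_one_sq, one_pow, one_mul, div_eq_mul_inv, ← inv_pow, inv_neg, inv_one,
    sub_eq_add_neg]
  ring

theorem stmt15 (κ : ℕ) (hκ : 0 < κ) (a : ℝ) (b : ℕ) (hb1 : 1 ≤ b) (hbκ : b ≤ κ) (z : ℝ) :
    Tendsto (fun N : ℝ => dualHahn κ (-(b : ℝ)) (-a) (a + b + N) z / N ^ (κ - b)) atTop
      (𝓝 ((poch ((b : ℝ) + 1) (κ - b) / (-1) ^ (b + κ)) * lam b (-(b : ℝ) - a) z)) :=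
  stmt15_general κ a b hbκ z
end
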